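/- arXiv:2605.04351 — 3 statements merged into one kernel-verified Lean document; each statement's English description precedes it below -/
import Mathlib

section
/- Let a > 0 and let μ be a locally finite Borel measure on the open interval (0,∞) of the real line satisfying the scaling law μ(λ·A) = λ^a · μ(A) for every Borel set A ⊆ (0,∞) and every λ > 0 (where λ·A = {λu : u ∈ A}). Then there exists a constant C ≥ 0 such that μ equals the measure with density u ↦ C · u^(a−1) with respect to Lebesgue measure on (0,∞). -/
/-!
Dilating `(0, 1]` by `t` gives `μ (0, t] = t ^ a * μ (0, 1]`, and the density
`C * u ^ (a - 1)` with `C = a * μ (0, 1]` assigns the same values; as both measures vanish on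
`(-∞, 0]`, they agree on every `(-∞, t]` and hence everywhere. That `μ (0, 1]` is finite comes
from local finiteness on the compact `[1/2, 1]` and the decomposition of `(0, 1]` into the
dilates `2⁻ⁿ • (1/2, 1]`, whose measures form a geometric series of ratio `2 ^ (-a) < 1`.
-/

open MeasureTheory Set
open scoped ENNReal

theorem Ioc_zero_one_subset_iUnion_Ioc_pow {r : ℝ} (hr₀ : 0 < r) (hr₁ : r < 1) :
    Ioc 0 1 ⊆ ⋃ n : ℕ, Ioc (r ^ (n + 1)) (r ^ n) := by
  intro x ⟨hx₀, hx₁⟩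
  obtain ⟨n, hn, hn'⟩ :=
    exists_nat_pow_near (one_le_inv_iff₀.2 ⟨hx₀, hx₁⟩) ((one_lt_inv₀ hr₀).2 hr₁)
  rw [inv_pow, inv_le_inv₀ (pow_pos hr₀ _) hx₀] at hn
  rw [inv_pow, inv_lt_inv₀ hx₀ (pow_pos hr₀ _)] at hn'
  exact mem_iUnion.2 ⟨n, hn', hn⟩

def ScalingCovariant (a : ℝ) (μ : Measure ℝ) : Prop :=
  ∀ lam : ℝ, 0 < lam → ∀ A : Set ℝ, MeasurableSet A → A ⊆ Ioi 0 →
    μ ((fun u => lam * u) '' A) = ENNReal.ofReal (lam ^ a) * μ A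

namespace ScalingCovariant

variable {a : ℝ} {μ : Measure ℝ}

theorem measure_Ioc_mul (h : ScalingCovariant a μ) {lam : ℝ} (hlam : 0 < lam) {x : ℝ}
    (hx : 0 ≤ x) (y : ℝ) :
    μ (Ioc (lam * x) (lam * y)) = ENNReal.ofReal (lam ^ a) * μ (Ioc x y) := by
  rw [← image_mul_left_Ioc hlam]
  exact h lam hlam _ measurableSet_Ioc fun u hu => hx.trans_lt hu.1

theorem measure_Ioc_zero (h : ScalingCovariant a μ) {t : ℝ} (ht : 0 < t) :
    μ (Ioc 0 t) = ENNReal.ofReal (t ^ a) * μ (Ioc 0 1) := by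
  simpa using h.measure_Ioc_mul ht le_rfl 1

theorem measure_Ioc_pow_succ_pow (h : ScalingCovariant a μ) {r : ℝ} (hr : 0 < r) (n : ℕ) :
    μ (Ioc (r ^ (n + 1)) (r ^ n)) = ENNReal.ofReal (r ^ a) ^ n * μ (Ioc r 1) := by
  have := h.measure_Ioc_mul (pow_pos hr n) hr.le 1
  rwa [mul_one, ← pow_succ, ← Real.rpow_pow_comm hr.le,
    ENNReal.ofReal_pow (Real.rpow_nonneg hr.le a)] at this

theorem measure_Ioc_zero_one_ne_top (h : ScalingCovariant a μ) (ha : 0 < a) {r : ℝ}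
    (hr₀ : 0 < r) (hr₁ : r < 1) (hfin : μ (Ioc r 1) ≠ ∞) : μ (Ioc 0 1) ≠ ∞ := by
  have hq : ENNReal.ofReal (r ^ a) < 1 :=
    ENNReal.ofReal_lt_one.2 (Real.rpow_lt_one hr₀.le hr₁ ha)
  refine ((measure_mono (Ioc_zero_one_subset_iUnion_Ioc_pow hr₀ hr₁)).trans_lt ?_).ne
  calc μ (⋃ n : ℕ, Ioc (r ^ (n + 1)) (r ^ n))
      ≤ ∑' n : ℕ, μ (Ioc (r ^ (n + 1)) (r ^ n)) := measure_iUnion_le _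
    _ = (1 - ENNReal.ofReal (r ^ a))⁻¹ * μ (Ioc r 1) := by
      simp_rw [h.measure_Ioc_pow_succ_pow hr₀, ENNReal.tsum_mul_right, ENNReal.tsum_geometric]
    _ < ∞ := ENNReal.mul_lt_top (ENNReal.inv_lt_top.2 (tsub_pos_of_lt hq)) hfin.lt_top

end ScalingCovariant

theorem measure_Iic_eq_measure_Ioc_zero {ρ : Measure ℝ} (h₀ : ρ (Iic 0) = 0) (t : ℝ) :
    ρ (Iic t) = ρ (Ioc 0 t) := by
  refine le_antisymm ?_ (measure_mono Ioc_subset_Iic_self)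
  calc ρ (Iic t) ≤ ρ (Iic 0 ∪ Ioc 0 t) := measure_mono Iic_subset_Iic_union_Ioc
    _ ≤ ρ (Iic 0) + ρ (Ioc 0 t) := measure_union_le _ _
    _ = ρ (Ioc 0 t) := by rw [h₀, zero_add]

theorem MeasureTheory.Measure.ext_of_Iic' {α : Type*} [TopologicalSpace α]
    {m : MeasurableSpace α} [SecondCountableTopology α] [LinearOrder α] [OrderTopology α]
    [BorelSpace α] [NoMinOrder α] (μ ν : Measure α) (hμ : ∀ a, μ (Iic a) ≠ ∞)
    (h : ∀ a, μ (Iic a) = ν (Iic a)) : μ = ν := by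
  refine Measure.ext_of_Ioc' μ ν (fun a b _ => ne_top_of_le_ne_top (hμ b)
    (measure_mono Ioc_subset_Iic_self)) fun a b hab => ?_
  have hsub : Iic a ⊆ Iic b := Iic_subset_Iic.2 hab.le
  rw [← Iic_sdiff_Iic, measure_sdiff hsub nullMeasurableSet_Iic (hμ a),
    measure_sdiff hsub nullMeasurableSet_Iic (h a ▸ hμ a), h, h]

theorem MeasureTheory.Measure.ext_of_Ioc_zero {μ ν : Measure ℝ} (hμ : μ (Iic 0) = 0)
    (hν : ν (Iic 0) = 0) (hfin : ∀ t, 0 < t → μ (Ioc 0 t) ≠ ∞)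
    (h : ∀ t, 0 < t → μ (Ioc 0 t) = ν (Ioc 0 t)) : μ = ν := by
  refine Measure.ext_of_Iic' μ ν (fun t => ?_) (fun t => ?_) <;>
    simp only [measure_Iic_eq_measure_Ioc_zero hμ, measure_Iic_eq_measure_Ioc_zero hν] <;>
    rcases le_or_gt t 0 with ht | ht
  · simp [Ioc_eq_empty ht.not_gt]
  · exact hfin t ht
  · simp [Ioc_eq_empty ht.not_gt]
  · exact h t ht

theorem withDensity_rpow_apply_Ioc_zero {a C t : ℝ} (ha : 0 < a) (hC : 0 ≤ C) (ht : 0 ≤ t) :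
    (volume.restrict (Ioi 0)).withDensity (fun u => ENNReal.ofReal (C * u ^ (a - 1))) (Ioc 0 t)
      = ENNReal.ofReal (C / a * t ^ a) := by
  have hint : IntegrableOn (fun u : ℝ => C * u ^ (a - 1)) (Ioc 0 t) := by
    have := intervalIntegral.intervalIntegrable_rpow' (a := 0) (b := t) (by linarith : -1 < a - 1)
    exact ((intervalIntegrable_iff_integrableOn_Ioc_of_le ht).1 this).const_mul C
  have hnonneg : 0 ≤ᵐ[volume.restrict (Ioc 0 t)] fun u : ℝ => C * u ^ (a - 1) := by
    filter_upwards [ae_restrict_mem measurableSet_Ioc] with u hu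
    exact mul_nonneg hC (Real.rpow_nonneg hu.1.le _)
  rw [withDensity_apply _ measurableSet_Ioc, Measure.restrict_restrict measurableSet_Ioc,
    inter_eq_left.2 Ioc_subset_Ioi_self, ← ofReal_integral_eq_lintegral_ofReal hint hnonneg,
    integral_const_mul, ← intervalIntegral.integral_of_le ht,
    integral_rpow (Or.inl (by linarith)), sub_add_cancel, Real.zero_rpow ha.ne', sub_zero,
    mul_div_assoc', div_mul_eq_mul_div]

/-- A locally finite Borel measure on `(0,∞)` (encoded as a Borel measure on
`ℝ` vanishing on `(-∞,0]` and locally finite at every point of `(0,∞)`) satisfying the scaling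
law `μ(λ·A) = λ^a · μ(A)` has density `C · u^(a-1)` with respect to Lebesgue measure
on `(0,∞)`, for some constant `C ≥ 0`. -/
theorem scaling_covariant_measure_is_power_density
    (a : ℝ) (ha : 0 < a) (μ : Measure ℝ)
    (hsupp : μ (Iic 0) = 0)
    (hloc : ∀ u : ℝ, 0 < u → ∃ s ∈ nhds u, μ s < ⊤)
    (hscal : ∀ lam : ℝ, 0 < lam → ∀ A : Set ℝ, MeasurableSet A → A ⊆ Ioi 0 →
      μ ((fun u => lam * u) '' A) = ENNReal.ofReal (lam ^ a) * μ A) :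
    ∃ C : ℝ, 0 ≤ C ∧
      μ = (volume.restrict (Ioi 0)).withDensity
        (fun u => ENNReal.ofReal (C * u ^ (a - 1))) := by
  have h : ScalingCovariant a μ := hscal
  have hhalf : μ (Ioc (1 / 2) 1) ≠ ∞ := by
    refine ((measure_mono Ioc_subset_Icc_self).trans_lt ?_).ne
    refine isCompact_Icc.measure_lt_top_of_nhdsWithin fun u hu => ?_
    exact Measure.FiniteAtFilter.filter_mono nhdsWithin_le_nhds
      (hloc u (one_half_pos.trans_le hu.1))
  have hc := h.measure_Ioc_zero_one_ne_top ha one_half_pos one_half_lt_one hhalf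
  refine ⟨a * (μ (Ioc 0 1)).toReal, by positivity, ?_⟩
  refine Measure.ext_of_Ioc_zero hsupp ?_ (fun t ht => ?_) (fun t ht => ?_)
  · exact withDensity_absolutelyContinuous _ _ (by simp [Measure.restrict_apply, Iic_inter_Ioi])
  · rw [h.measure_Ioc_zero ht]
    exact ENNReal.mul_ne_top ENNReal.ofReal_ne_top hc
  · rw [h.measure_Ioc_zero ht, withDensity_rpow_apply_Ioc_zero ha (by positivity) ht.le,
      mul_div_cancel_left₀ _ ha.ne', mul_comm, ENNReal.ofReal_mul ENNReal.toReal_nonneg,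
      ENNReal.ofReal_toReal hc]
end

section
/- Let a ∈ ℝ and let ν be a locally finite Borel measure on ℝ satisfying ν(E + s) = e^(a·s) · ν(E) for every Borel set E ⊆ ℝ and every s ∈ ℝ. Then there exists a constant C ≥ 0 such that ν equals the measure with density t ↦ C · e^(a·t) with respect to Lebesgue measure on ℝ. -/
/-!
Reweighting `ν` by `e^(-a·t)` exactly cancels the factor `e^(a·s)` picked up under translation,
so `e^(-a·t) ν` is translation invariant and hence `C · volume` by uniqueness of Haar measure;
reweighting back by `e^(a·t)` recovers `ν`.
-/

open MeasureTheory Set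
open scoped ENNReal

lemma MeasurableEmbedding.map_withDensity_comp {α β : Type*} [MeasurableSpace α]
    [MeasurableSpace β] {f : α → β} (hf : MeasurableEmbedding f) (μ : Measure α) (g : β → ℝ≥0∞) :
    (μ.withDensity (g ∘ f)).map f = (μ.map f).withDensity g := by
  ext s hs
  rw [Measure.map_apply hf.measurable hs, withDensity_apply _ (hf.measurable hs),
    withDensity_apply _ hs, hf.restrict_map, hf.lintegral_map]
  rfl

namespace MeasureTheory.Measure

variable {a : ℝ} {ν : Measure ℝ}

lemma map_add_right_eq_smul_of_image_add_right
    (hquasi : ∀ E : Set ℝ, MeasurableSet E → ∀ s : ℝ,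
      ν ((fun t => t + s) '' E) = ENNReal.ofReal (Real.exp (a * s)) * ν E) (s : ℝ) :
    ν.map (· + s) = ENNReal.ofReal (Real.exp (-(a * s))) • ν := by
  ext E hE
  rw [map_apply (measurable_add_const s) hE, ← image_add_right', hquasi E hE, smul_apply,
    smul_eq_mul, mul_neg]

lemma isAddLeftInvariant_withDensity_exp_neg
    (hmap : ∀ s : ℝ, ν.map (· + s) = ENNReal.ofReal (Real.exp (-(a * s))) • ν) :
    (ν.withDensity fun t => ENNReal.ofReal (Real.exp (-(a * t)))).IsAddLeftInvariant := by
  refine ⟨fun c => ?_⟩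
  have hdensity : (fun t => ENNReal.ofReal (Real.exp (-(a * t)))) =
      (ENNReal.ofReal (Real.exp (a * c)) • fun u => ENNReal.ofReal (Real.exp (-(a * u)))) ∘
        (· + c) := by
    funext t
    simp only [Function.comp_apply, Pi.smul_apply, smul_eq_mul]
    rw [← ENNReal.ofReal_mul (Real.exp_nonneg _), ← Real.exp_add]
    ring_nf
  have hshift : (c + ·) = (· + c) := funext fun t => add_comm c t
  rw [hshift]
  conv_lhs => rw [hdensity]
  rw [(measurableEmbedding_addRight c).map_withDensity_comp, hmap,
    withDensity_smul_measure, withDensity_smul' _ _ ENNReal.ofReal_ne_top, smul_smul,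
    ← ENNReal.ofReal_mul (Real.exp_nonneg _), ← Real.exp_add, neg_add_cancel, Real.exp_zero,
    ENNReal.ofReal_one, one_smul]

lemma withDensity_exp_neg_withDensity_exp (a : ℝ) (ν : Measure ℝ) :
    (ν.withDensity fun t => ENNReal.ofReal (Real.exp (-(a * t)))).withDensity
      (fun t => ENNReal.ofReal (Real.exp (a * t))) = ν := by
  rw [← withDensity_mul _ (by fun_prop) (by fun_prop)]
  convert withDensity_one (μ := ν)
  funext t
  rw [Pi.mul_apply, ← ENNReal.ofReal_mul (Real.exp_nonneg _), ← Real.exp_add, neg_add_cancel,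
    Real.exp_zero, ENNReal.ofReal_one, Pi.one_apply]

end MeasureTheory.Measure

open Measure in
/-- If a locally finite Borel measure `ν` on `ℝ` satisfies
`ν(E + s) = e^(a·s) · ν(E)` for all Borel `E` and all `s`, then `ν` has density
`t ↦ C · e^(a·t)` with respect to Lebesgue measure, for some constant `C ≥ 0`. -/
theorem quasi_invariant_measure_is_exponential_density
    (a : ℝ) (ν : Measure ℝ) [IsLocallyFiniteMeasure ν]
    (hquasi : ∀ E : Set ℝ, MeasurableSet E → ∀ s : ℝ,
      ν ((fun t => t + s) '' E) = ENNReal.ofReal (Real.exp (a * s)) * ν E) :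
    ∃ C : ℝ, 0 ≤ C ∧
      ν = volume.withDensity (fun t => ENNReal.ofReal (C * Real.exp (a * t))) := by
  set μ := ν.withDensity fun t => ENNReal.ofReal (Real.exp (-(a * t)))
  have : IsLocallyFiniteMeasure μ := .withDensity_ofReal (by fun_prop)
  have : μ.IsAddLeftInvariant := isAddLeftInvariant_withDensity_exp_neg
    (map_add_right_eq_smul_of_image_add_right hquasi)
  set C := μ.addHaarScalarFactor volume
  refine ⟨C, C.coe_nonneg, ?_⟩
  have hdensity : (fun t => ENNReal.ofReal (C * Real.exp (a * t))) =
      (C : ℝ≥0∞) • fun t => ENNReal.ofReal (Real.exp (a * t)) := by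
    funext t
    rw [ENNReal.ofReal_mul C.coe_nonneg, ENNReal.ofReal_coe_nnreal, Pi.smul_apply, smul_eq_mul]
  rw [hdensity, withDensity_smul' _ _ ENNReal.coe_ne_top, ← withDensity_smul_measure,
    ← ENNReal.smul_def, ← isAddLeftInvariant_eq_smul μ volume,
    withDensity_exp_neg_withDensity_exp]
end

section
/- Let x > 0 and let μ be a locally finite Borel measure on (0,∞) satisfying: (i) scaling covariance, μ(λ·A) = λ^(x/2) · μ(A) for every Borel set A ⊆ (0,∞) and every λ > 0; and (ii) Gaussian normalization, the function u ↦ e^(−u) is μ-integrable with ∫₀^∞ e^(−u) dμ(u) = π^(x/2). Then μ equals the Mellin–Gamma measure, i.e. the measure with density u ↦ (π^(x/2)/Γ(x/2)) · u^(x/2−1) with respect to Lebesgue measure on (0,∞), where Γ denotes the real Gamma function. -/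
/-!
Scaling covariance gives `μ (0, t] = t ^ (x/2) * μ (0, 1]`, and `μ (0, 1]` is finite because
`e^(-u) ≥ e^(-1)` there and `e^(-u)` is integrable. Hence `μ` agrees on every `(-∞, t]` with the
measure of density `c * u ^ (x/2 - 1)` on `(0, ∞)`, `c = (x/2) * μ (0, 1]`. The Gaussian integral
of that measure is `c * Γ(x/2)`, so the normalization forces `c = π ^ (x/2) / Γ(x/2)`.
-/

open MeasureTheory Set
open scoped ENNReal

namespace MeasureTheory.Measure

theorem measure_Iic_eq_measure_Ioc {α : Type*} [LinearOrder α] [MeasurableSpace α]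
    {μ : Measure α} {a : α} (h : μ (Iic a) = 0) (t : α) : μ (Iic t) = μ (Ioc a t) := by
  rw [← Ioi_inter_Iic, inter_comm, measure_inter_conull (by rwa [compl_Ioi])]

theorem ext_of_Iic'_s4 {α : Type*} [TopologicalSpace α] {m : MeasurableSpace α}
    [SecondCountableTopology α] [LinearOrder α] [OrderTopology α] [BorelSpace α] [NoMinOrder α]
    (μ ν : Measure α) (hμ : ∀ a, μ (Iic a) ≠ ∞) (h : ∀ a, μ (Iic a) = ν (Iic a)) : μ = ν := by
  refine ext_of_Ioc' μ ν
    (fun a b _ => ne_top_of_le_ne_top (hμ b) (measure_mono Ioc_subset_Iic_self)) fun a b hab => ?_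
  rw [← Iic_sdiff_Iic, measure_sdiff (Iic_subset_Iic.2 hab.le) nullMeasurableSet_Iic (hμ a),
    measure_sdiff (Iic_subset_Iic.2 hab.le) nullMeasurableSet_Iic (h a ▸ hμ a), h a, h b]

end MeasureTheory.Measure

theorem measure_Iic_ne_top_of_integrable_exp_neg {μ : Measure ℝ}
    (h : Integrable (fun u => Real.exp (-u)) μ) (b : ℝ) : μ (Iic b) ≠ ∞ := by
  refine ne_top_of_le_ne_top (h.measure_norm_ge_lt_top (Real.exp_pos (-b))).ne
    (measure_mono fun u (hu : u ≤ b) => ?_)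
  simpa [Real.abs_exp] using hu

noncomputable def powerLawMeasure (s C : ℝ) : Measure ℝ :=
  (volume.restrict (Ioi 0)).withDensity fun u => ENNReal.ofReal (C * u ^ (s - 1))

section powerLawMeasure

variable {s C : ℝ}

theorem powerLawMeasure_Iic_zero : powerLawMeasure s C (Iic 0) = 0 := by
  rw [powerLawMeasure, withDensity_apply _ measurableSet_Iic,
    Measure.restrict_restrict measurableSet_Iic, Iic_inter_Ioi, Ioc_self, Measure.restrict_empty,
    lintegral_zero_measure]

theorem powerLawMeasure_Ioc_zero (hs : 0 < s) (hC : 0 ≤ C) {t : ℝ} (ht : 0 ≤ t) :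
    powerLawMeasure s C (Ioc 0 t) = ENNReal.ofReal (C / s * t ^ s) := by
  rw [powerLawMeasure, withDensity_apply _ measurableSet_Ioc,
    Measure.restrict_restrict measurableSet_Ioc, inter_eq_self_of_subset_left Ioc_subset_Ioi_self,
    ← ofReal_integral_eq_lintegral_ofReal]
  · rw [← intervalIntegral.integral_of_le ht, intervalIntegral.integral_const_mul,
      integral_rpow (Or.inl (by linarith)), sub_add_cancel, Real.zero_rpow hs.ne']
    congr 1
    ring
  · exact (intervalIntegrable_iff_integrableOn_Ioc_of_le ht).mp
      ((intervalIntegral.intervalIntegrable_rpow' (by linarith)).const_mul C)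
  · exact ae_restrict_of_forall_mem measurableSet_Ioc fun u hu =>
      mul_nonneg hC (Real.rpow_nonneg hu.1.le _)

theorem integral_exp_neg_powerLawMeasure (hs : 0 < s) (hC : 0 ≤ C) :
    ∫ u, Real.exp (-u) ∂powerLawMeasure s C = C * Real.Gamma s := by
  rw [powerLawMeasure, integral_withDensity_eq_integral_toReal_smul₀ ?_ ?_,
    Real.Gamma_eq_integral hs, ← integral_const_mul]
  · refine setIntegral_congr_fun measurableSet_Ioi fun u (hu : 0 < u) => ?_
    rw [ENNReal.toReal_ofReal (mul_nonneg hC (Real.rpow_nonneg hu.le _)), smul_eq_mul]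
    ring
  · fun_prop
  · exact ae_of_all _ fun _ => ENNReal.ofReal_lt_top

end powerLawMeasure

theorem mellin_gamma_classification_general
    (x : ℝ) (hx : 0 < x) (μ : Measure ℝ)
    (hsupp : μ (Iic 0) = 0)
    (hscal : ∀ lam : ℝ, 0 < lam → ∀ A : Set ℝ, MeasurableSet A → A ⊆ Ioi 0 →
      μ ((fun u => lam * u) '' A) = ENNReal.ofReal (lam ^ (x / 2)) * μ A)
    (hgauss_int : Integrable (fun u => Real.exp (-u)) μ)
    (hgauss : ∫ u, Real.exp (-u) ∂μ = Real.pi ^ (x / 2)) :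
    μ = (volume.restrict (Ioi 0)).withDensity
      (fun u => ENNReal.ofReal
        (Real.pi ^ (x / 2) / Real.Gamma (x / 2) * u ^ (x / 2 - 1))) := by
  have hs : 0 < x / 2 := by positivity
  have hfin : ∀ t, μ (Iic t) ≠ ∞ := measure_Iic_ne_top_of_integrable_exp_neg hgauss_int
  have hscaled (t : ℝ) (ht : 0 < t) :
      μ (Ioc 0 t) = ENNReal.ofReal (t ^ (x / 2)) * μ (Ioc 0 1) := by
    simpa [image_mul_left_Ioc ht] using hscal t ht (Ioc 0 1) measurableSet_Ioc Ioc_subset_Ioi_self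
  set m := (μ (Ioc 0 1)).toReal
  have hμ : μ = powerLawMeasure (x / 2) (x / 2 * m) := by
    refine Measure.ext_of_Iic'_s4 _ _ hfin fun t => ?_
    rw [Measure.measure_Iic_eq_measure_Ioc hsupp,
      Measure.measure_Iic_eq_measure_Ioc powerLawMeasure_Iic_zero]
    rcases le_or_gt t 0 with ht | ht
    · simp [Ioc_eq_empty ht.not_gt]
    · rw [hscaled t ht, powerLawMeasure_Ioc_zero hs (by positivity) ht.le,
        mul_div_cancel_left₀ _ hs.ne', mul_comm, ENNReal.ofReal_mul ENNReal.toReal_nonneg,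
        ENNReal.ofReal_toReal (ne_top_of_le_ne_top (hfin 1) (measure_mono Ioc_subset_Iic_self))]
  have hC : x / 2 * m = Real.pi ^ (x / 2) / Real.Gamma (x / 2) := by
    rw [eq_div_iff (Real.Gamma_pos_of_pos hs).ne',
      ← integral_exp_neg_powerLawMeasure hs (by positivity), ← hμ, hgauss]
  rw [hμ, hC, powerLawMeasure]

/-- **Mellin–Gamma classification.** Let `x > 0` and let `μ` be a locally
finite Borel measure on `(0,∞)` (encoded as a Borel measure on `ℝ` vanishing on `(-∞,0]`
and locally finite at every point of `(0,∞)`) satisfying scaling covariance of degree `x/2`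
and the Gaussian normalization `∫ e^(-u) dμ(u) = π^(x/2)`.  Then `μ` is the Mellin–Gamma
measure with density `u ↦ (π^(x/2)/Γ(x/2)) · u^(x/2-1)` with respect to Lebesgue measure
on `(0,∞)`. -/
theorem mellin_gamma_classification
    (x : ℝ) (hx : 0 < x) (μ : Measure ℝ)
    (hsupp : μ (Iic 0) = 0)
    (hloc : ∀ u : ℝ, 0 < u → ∃ s ∈ nhds u, μ s < ⊤)
    (hscal : ∀ lam : ℝ, 0 < lam → ∀ A : Set ℝ, MeasurableSet A → A ⊆ Ioi 0 →
      μ ((fun u => lam * u) '' A) = ENNReal.ofReal (lam ^ (x / 2)) * μ A)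
    (hgauss_int : Integrable (fun u => Real.exp (-u)) μ)
    (hgauss : ∫ u, Real.exp (-u) ∂μ = Real.pi ^ (x / 2)) :
    μ = (volume.restrict (Ioi 0)).withDensity
      (fun u => ENNReal.ofReal
        (Real.pi ^ (x / 2) / Real.Gamma (x / 2) * u ^ (x / 2 - 1))) :=
  mellin_gamma_classification_general x hx μ hsupp hscal hgauss_int hgauss
end
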